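/- arXiv:1203.1943 — 2 statements merged into one kernel-verified Lean document; each statement's English description precedes it below -/
import Mathlib

section
/- Let Q be a finite acyclic quiver, t ∈ V, and v, w lists over V. In HK(Q) the following identities hold: (i) if there is no arrow from t to any vertex in {w} ∪ {t} (t is a sink in the full subquiver on {t} ∪ {w}), then x_t·X_w·x_t = X_w·x_t; (ii) if there is no arrow from any vertex in {w} ∪ {t} to t (t is a source in the full subquiver on {t} ∪ {w}), then x_t·X_w·x_t = x_t·X_w; (iii) if for all p ∈ {v} and q ∈ {w} neither arr p q nor arr q p holds, then X_v·X_w = X_w·X_v. -/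
/-- The defining relations of the Hecke–Kiselman monoid of a quiver with
vertex type `V` and arrow relation `arr`. -/
inductive HKRel {V : Type} (arr : V → V → Prop) : FreeMonoid V → FreeMonoid V → Prop
  | idem (t : V) :
      HKRel arr (FreeMonoid.of t * FreeMonoid.of t) (FreeMonoid.of t)
  | braid (s t : V) :
      HKRel arr (FreeMonoid.of s * FreeMonoid.of t * FreeMonoid.of s)
        (FreeMonoid.of t * FreeMonoid.of s * FreeMonoid.of t)
  | absorb (s t : V) : ¬ arr t s →
      HKRel arr (FreeMonoid.of t * FreeMonoid.of s * FreeMonoid.of t)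
        (FreeMonoid.of s * FreeMonoid.of t)

/-- The congruence on the free monoid generated by the Hecke–Kiselman relations. -/
def HKCon {V : Type} (arr : V → V → Prop) : Con (FreeMonoid V) := conGen (HKRel arr)

/-- The Hecke–Kiselman monoid of the quiver `(V, arr)`. -/
abbrev HK {V : Type} (arr : V → V → Prop) : Type := (HKCon arr).Quotient

/-- The generator of the Hecke–Kiselman monoid attached to the vertex `t`. -/
def HK.x {V : Type} (arr : V → V → Prop) (t : V) : HK arr :=
  (HKCon arr).mk' (FreeMonoid.of t)

/-- The quiver `(V, arr)` is acyclic: the transitive closure of `arr` is irreflexive. -/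
def IsAcyclicQuiver {V : Type} (arr : V → V → Prop) : Prop :=
  ∀ v : V, ¬ Relation.TransGen arr v v

/-- The monomial `X_w` in the Hecke–Kiselman monoid attached to a word (list) `w` over `V`. -/
def HK.X {V : Type} (arr : V → V → Prop) (w : List V) : HK arr :=
  (w.map (HK.x arr)).prod

/-!
Each of the three identities is the one-letter Hecke–Kiselman relation propagated along the
word `w`: if `x_t x_a x_t = x_a x_t` for every letter `a` of `w` (which is the relation
`absorb` when `¬ arr t a`), then `x_t X_w x_t = X_w x_t` by induction on `w`, using
`x_t x_t = x_t` for the empty word; the source case is symmetric, and (iii) is the fact that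
two letters with no arrow between them commute, extended to products.
-/

namespace IsIdempotentElem

variable {M : Type*} [Monoid M] {e : M}

theorem mul_list_prod_mul_eq_list_prod_mul (he : IsIdempotentElem e) {l : List M}
    (h : ∀ a ∈ l, e * a * e = a * e) : e * l.prod * e = l.prod * e := by
  induction l with
  | nil => simpa using he.eq
  | cons a l ih =>
    rw [List.forall_mem_cons] at h
    calc e * (a :: l).prod * e = e * a * (e * l.prod * e) := by
          rw [ih h.2, List.prod_cons]; simp only [mul_assoc]
      _ = (e * a * e) * l.prod * e := by simp only [mul_assoc]
      _ = a * (e * l.prod * e) := by rw [h.1]; simp only [mul_assoc]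
      _ = (a :: l).prod * e := by rw [ih h.2, List.prod_cons, mul_assoc]

theorem mul_list_prod_mul_eq_mul_list_prod (he : IsIdempotentElem e) {l : List M}
    (h : ∀ a ∈ l, e * a * e = e * a) : e * l.prod * e = e * l.prod := by
  induction l with
  | nil => simpa using he.eq
  | cons a l ih =>
    rw [List.forall_mem_cons] at h
    calc e * (a :: l).prod * e = (e * a * e) * l.prod * e := by
          rw [List.prod_cons, h.1]; simp only [mul_assoc]
      _ = e * a * (e * l.prod * e) := by simp only [mul_assoc]
      _ = (e * a * e) * l.prod := by rw [ih h.2]; simp only [mul_assoc]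
      _ = e * (a :: l).prod := by rw [h.1, List.prod_cons, mul_assoc]

end IsIdempotentElem

namespace HK

variable {V : Type} {arr : V → V → Prop}

theorem mk'_eq_of_rel {a b : FreeMonoid V} (h : HKRel arr a b) :
    (HKCon arr).mk' a = (HKCon arr).mk' b :=
  (Con.eq _).2 (ConGen.Rel.of _ _ h)

theorem isIdempotentElem_x (t : V) : IsIdempotentElem (HK.x arr t) := by
  simpa [IsIdempotentElem, HK.x] using mk'_eq_of_rel (HKRel.idem (arr := arr) t)

theorem x_braid (s t : V) :
    HK.x arr s * HK.x arr t * HK.x arr s = HK.x arr t * HK.x arr s * HK.x arr t := by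
  simpa [HK.x] using mk'_eq_of_rel (HKRel.braid (arr := arr) s t)

theorem x_mul_x_mul_x_of_not_arr {s t : V} (h : ¬ arr t s) :
    HK.x arr t * HK.x arr s * HK.x arr t = HK.x arr s * HK.x arr t := by
  simpa [HK.x] using mk'_eq_of_rel (HKRel.absorb s t h)

theorem x_mul_x_mul_x_of_not_arr' {s t : V} (h : ¬ arr s t) :
    HK.x arr t * HK.x arr s * HK.x arr t = HK.x arr t * HK.x arr s := by
  rw [x_braid t s, x_mul_x_mul_x_of_not_arr h]

theorem commute_x {p q : V} (hpq : ¬ arr p q) (hqp : ¬ arr q p) :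
    Commute (HK.x arr p) (HK.x arr q) := by
  rw [Commute, SemiconjBy, ← x_mul_x_mul_x_of_not_arr hqp, x_braid q p,
    x_mul_x_mul_x_of_not_arr hpq]

theorem x_mul_X_mul_x_of_sink {t : V} {w : List V} (h : ∀ q ∈ w, ¬ arr t q) :
    HK.x arr t * HK.X arr w * HK.x arr t = HK.X arr w * HK.x arr t :=
  (isIdempotentElem_x t).mul_list_prod_mul_eq_list_prod_mul <| by
    simpa using fun q hq => x_mul_x_mul_x_of_not_arr (h q hq)

theorem x_mul_X_mul_x_of_source {t : V} {w : List V} (h : ∀ q ∈ w, ¬ arr q t) :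
    HK.x arr t * HK.X arr w * HK.x arr t = HK.x arr t * HK.X arr w :=
  (isIdempotentElem_x t).mul_list_prod_mul_eq_mul_list_prod <| by
    simpa using fun q hq => x_mul_x_mul_x_of_not_arr' (h q hq)

theorem commute_X {v w : List V} (h : ∀ p ∈ v, ∀ q ∈ w, ¬ arr p q ∧ ¬ arr q p) :
    Commute (HK.X arr v) (HK.X arr w) := by
  refine Commute.list_prod_left _ _ fun a ha => Commute.list_prod_right _ _ fun b hb => ?_
  obtain ⟨p, hp, rfl⟩ := List.mem_map.1 ha
  obtain ⟨q, hq, rfl⟩ := List.mem_map.1 hb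
  exact commute_x (h p hp q hq).1 (h p hp q hq).2

end HK

theorem hk_generalized_relations_general (V : Type) (arr : V → V → Prop)
    (t : V) (v w : List V) :
    ((∀ q ∈ t :: w, ¬ arr t q) →
      HK.x arr t * HK.X arr w * HK.x arr t = HK.X arr w * HK.x arr t) ∧
    ((∀ q ∈ t :: w, ¬ arr q t) →
      HK.x arr t * HK.X arr w * HK.x arr t = HK.x arr t * HK.X arr w) ∧
    ((∀ p ∈ v, ∀ q ∈ w, ¬ arr p q ∧ ¬ arr q p) →
      HK.X arr v * HK.X arr w = HK.X arr w * HK.X arr v) :=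
  ⟨fun h => HK.x_mul_X_mul_x_of_sink fun q hq => h q (List.mem_cons_of_mem t hq),
    fun h => HK.x_mul_X_mul_x_of_source fun q hq => h q (List.mem_cons_of_mem t hq),
    fun h => HK.commute_X h⟩

/-- Generalized relations in the Hecke–Kiselman monoid of a finite
acyclic quiver: (i) if `t` is a sink in the full subquiver on `{t} ∪ {w}`, then
`x_t · X_w · x_t = X_w · x_t`; (ii) if `t` is a source in the full subquiver on
`{t} ∪ {w}`, then `x_t · X_w · x_t = x_t · X_w`; (iii) if there is no arrow between
the subquivers on `{v}` and `{w}`, then `X_v · X_w = X_w · X_v`. -/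
theorem hk_generalized_relations (V : Type) [Fintype V] (arr : V → V → Prop)
    (hQ : IsAcyclicQuiver arr) (t : V) (v w : List V) :
    ((∀ q ∈ t :: w, ¬ arr t q) →
      HK.x arr t * HK.X arr w * HK.x arr t = HK.X arr w * HK.x arr t) ∧
    ((∀ q ∈ t :: w, ¬ arr q t) →
      HK.x arr t * HK.X arr w * HK.x arr t = HK.x arr t * HK.X arr w) ∧
    ((∀ p ∈ v, ∀ q ∈ w, ¬ arr p q ∧ ¬ arr q p) →
      HK.X arr v * HK.X arr w = HK.X arr w * HK.X arr v) :=
  hk_generalized_relations_general V arr t v w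
end

section
/- Let K_n be the bipartite type-A quiver with vertex set {1,…,n} in which each odd vertex is a source, i.e. there is an arrow i → j if and only if |i−j| = 1 and i is odd. Then the cardinality of the Hecke–Kiselman monoid HK(K_n) equals the Fibonacci number F_{2n+1}, where F_1 = F_2 = 1. -/
/-- The arrow relation of the bipartite type-`A` quiver `K_n` with vertices `1, …, n`
(modelled as `Fin n`, where `v : Fin n` represents the vertex `v + 1`): there is an
arrow `i → j` iff `|i − j| = 1` and `i` is odd, so every odd vertex is a source and
every even vertex is a sink. -/
def arrKn (n : ℕ) : Fin n → Fin n → Prop :=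
  fun i j => (((i : ℕ) : ℤ) - ((j : ℕ) : ℤ)).natAbs = 1 ∧ Odd ((i : ℕ) + 1)


namespace HKFib

variable {n : ℕ}

def Adj {n : ℕ} (a b : Fin n) : Prop := a.val + 1 = b.val ∨ b.val + 1 = a.val

lemma adj_symm {a b : Fin n} (h : Adj a b) : Adj b a := h.symm

lemma arrKn_iff {i j : Fin n} : arrKn n i j ↔ (Adj i j ∧ Even i.val) := by
  unfold arrKn Adj
  rw [Nat.odd_iff, Nat.even_iff]
  omega

lemma rel_base {u v : FreeMonoid (Fin n)} (h : HKRel (arrKn n) u v) :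
    HKCon (arrKn n) u v := ConGen.Rel.of u v h

lemma csymm {u v : FreeMonoid (Fin n)} (h : HKCon (arrKn n) u v) :
    HKCon (arrKn n) v u := (HKCon (arrKn n)).symm h

lemma ctrans {u v w : FreeMonoid (Fin n)} (h1 : HKCon (arrKn n) u v)
    (h2 : HKCon (arrKn n) v w) : HKCon (arrKn n) u w := (HKCon (arrKn n)).trans h1 h2

lemma mulL (w : FreeMonoid (Fin n)) {u v : FreeMonoid (Fin n)}
    (h : HKCon (arrKn n) u v) : HKCon (arrKn n) (w * u) (w * v) :=
  (HKCon (arrKn n)).mul ((HKCon (arrKn n)).refl w) h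

lemma mulR (w : FreeMonoid (Fin n)) {u v : FreeMonoid (Fin n)}
    (h : HKCon (arrKn n) u v) : HKCon (arrKn n) (u * w) (v * w) :=
  (HKCon (arrKn n)).mul h ((HKCon (arrKn n)).refl w)

lemma idem_rel (t : Fin n) :
    HKCon (arrKn n) (FreeMonoid.of t * FreeMonoid.of t) (FreeMonoid.of t) :=
  rel_base (HKRel.idem t)

lemma comm {s t : Fin n} (h : ¬ Adj s t) :
    HKCon (arrKn n) (FreeMonoid.of s * FreeMonoid.of t) (FreeMonoid.of t * FreeMonoid.of s) := by
  have hts : ¬ arrKn n t s := fun hc => h (adj_symm (arrKn_iff.mp hc).1)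
  have hst : ¬ arrKn n s t := fun hc => h (arrKn_iff.mp hc).1
  exact csymm (ctrans (ctrans (csymm (rel_base (HKRel.absorb t s hst)))
    (rel_base (HKRel.braid s t))) (rel_base (HKRel.absorb s t hts)))

lemma adj_even_of {a b : Fin n} (h : Adj a b) (ha : Even a.val) : ¬ Even b.val := by
  rw [Nat.even_iff] at *
  rcases h with h | h <;> omega

lemma bab {a b : Fin n} (h : Adj a b) (ha : Even a.val) :
    HKCon (arrKn n) (FreeMonoid.of b * FreeMonoid.of a * FreeMonoid.of b)
      (FreeMonoid.of a * FreeMonoid.of b) :=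
  rel_base (HKRel.absorb a b (fun hc => adj_even_of h ha (arrKn_iff.mp hc).2))

lemma aba {a b : Fin n} (h : Adj a b) (ha : Even a.val) :
    HKCon (arrKn n) (FreeMonoid.of a * FreeMonoid.of b * FreeMonoid.of a)
      (FreeMonoid.of a * FreeMonoid.of b) :=
  ctrans (rel_base (HKRel.braid a b)) (bab h ha)

/-! ### words -/

def wd {n : ℕ} (l : List (Fin n)) : FreeMonoid (Fin n) := (l.map FreeMonoid.of).prod

@[simp] lemma wd_nil : wd ([] : List (Fin n)) = 1 := rfl

@[simp] lemma wd_cons (a : Fin n) (l : List (Fin n)) :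
    wd (a :: l) = FreeMonoid.of a * wd l := by simp [wd]

@[simp] lemma wd_append (l m : List (Fin n)) : wd (l ++ m) = wd l * wd m := by
  simp [wd]

@[simp] lemma wd_singleton (a : Fin n) : wd [a] = FreeMonoid.of a := by simp [wd]

lemma src_pump {g : Fin n} (hg : Even g.val) :
    ∀ v : List (Fin n),
      HKCon (arrKn n) (FreeMonoid.of g * wd v * FreeMonoid.of g) (FreeMonoid.of g * wd v)
  | [] => by simpa using idem_rel g
  | h :: v => by
    have IH := src_pump hg v
    by_cases hh : Adj g h
    · have h1 := csymm (aba hh hg)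
      have e1 : FreeMonoid.of g * wd (h :: v) * FreeMonoid.of g
          = (FreeMonoid.of g * FreeMonoid.of h) * (wd v * FreeMonoid.of g) := by
        simp [mul_assoc]
      have e2 : (FreeMonoid.of g * FreeMonoid.of h * FreeMonoid.of g) * (wd v * FreeMonoid.of g)
          = (FreeMonoid.of g * FreeMonoid.of h) * (FreeMonoid.of g * wd v * FreeMonoid.of g) := by
        simp [mul_assoc]
      have e3 : (FreeMonoid.of g * FreeMonoid.of h) * (FreeMonoid.of g * wd v)
          = (FreeMonoid.of g * FreeMonoid.of h * FreeMonoid.of g) * wd v := by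
        simp [mul_assoc]
      have e4 : (FreeMonoid.of g * FreeMonoid.of h) * wd v
          = FreeMonoid.of g * wd (h :: v) := by simp [mul_assoc]
      rw [e1]
      refine ctrans (mulR _ h1) ?_
      rw [e2]
      refine ctrans (mulL _ IH) ?_
      rw [e3, ← e4]
      exact mulR _ (aba hh hg)
    · have h1 := comm hh
      have e1 : FreeMonoid.of g * wd (h :: v) * FreeMonoid.of g
          = (FreeMonoid.of g * FreeMonoid.of h) * (wd v * FreeMonoid.of g) := by
        simp [mul_assoc]
      have e2 : (FreeMonoid.of h * FreeMonoid.of g) * (wd v * FreeMonoid.of g)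
          = FreeMonoid.of h * (FreeMonoid.of g * wd v * FreeMonoid.of g) := by
        simp [mul_assoc]
      have e3 : FreeMonoid.of h * (FreeMonoid.of g * wd v)
          = (FreeMonoid.of h * FreeMonoid.of g) * wd v := by simp [mul_assoc]
      have e4 : (FreeMonoid.of g * FreeMonoid.of h) * wd v
          = FreeMonoid.of g * wd (h :: v) := by simp [mul_assoc]
      rw [e1]
      refine ctrans (mulR _ h1) ?_
      rw [e2]
      refine ctrans (mulL _ IH) ?_
      rw [e3]
      refine ctrans (mulR _ (csymm h1)) ?_
      rw [e4]
      exact (HKCon (arrKn n)).refl _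

lemma snk_pump {g : Fin n} (hg : ¬ Even g.val) (v : List (Fin n)) :
    HKCon (arrKn n) (FreeMonoid.of g * wd v * FreeMonoid.of g) (wd v * FreeMonoid.of g) := by
  induction v using List.reverseRecOn with
  | nil => simpa using idem_rel g
  | append_singleton v h IH =>
    by_cases hh : Adj g h
    · have hev : Even h.val := by
        rw [Nat.even_iff] at hg ⊢
        rcases hh with h1 | h1 <;> omega
      -- relation: g h g ~ h g   (absorb with source h)
      have habs := bab (adj_symm hh) hev   -- of g * of h * of g ~ of h * of g
      have e1 : FreeMonoid.of g * wd (v ++ [h]) * FreeMonoid.of g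
          = FreeMonoid.of g * wd v * (FreeMonoid.of h * FreeMonoid.of g) := by
        simp [mul_assoc]
      have e2 : FreeMonoid.of g * wd v * (FreeMonoid.of g * FreeMonoid.of h * FreeMonoid.of g)
          = (FreeMonoid.of g * wd v * FreeMonoid.of g) * (FreeMonoid.of h * FreeMonoid.of g) := by
        simp [mul_assoc]
      have e3 : (wd v * FreeMonoid.of g) * (FreeMonoid.of h * FreeMonoid.of g)
          = wd v * (FreeMonoid.of g * FreeMonoid.of h * FreeMonoid.of g) := by
        simp [mul_assoc]
      have e4 : wd v * (FreeMonoid.of h * FreeMonoid.of g)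
          = wd (v ++ [h]) * FreeMonoid.of g := by simp [mul_assoc]
      rw [e1]
      refine ctrans (mulL _ (csymm habs)) ?_
      rw [show FreeMonoid.of g * wd v * (FreeMonoid.of g * FreeMonoid.of h * FreeMonoid.of g)
          = (FreeMonoid.of g * wd v * FreeMonoid.of g) * (FreeMonoid.of h * FreeMonoid.of g) from e2]
      refine ctrans (mulR _ IH) ?_
      rw [e3]
      refine ctrans (mulL _ habs) ?_
      rw [e4]
      exact (HKCon (arrKn n)).refl _
    · have h1 := comm hh
      have e1 : FreeMonoid.of g * wd (v ++ [h]) * FreeMonoid.of g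
          = FreeMonoid.of g * wd v * (FreeMonoid.of h * FreeMonoid.of g) := by
        simp [mul_assoc]
      have e2 : FreeMonoid.of g * wd v * (FreeMonoid.of g * FreeMonoid.of h)
          = (FreeMonoid.of g * wd v * FreeMonoid.of g) * FreeMonoid.of h := by
        simp [mul_assoc]
      have e3 : (wd v * FreeMonoid.of g) * FreeMonoid.of h
          = wd v * (FreeMonoid.of g * FreeMonoid.of h) := by simp [mul_assoc]
      have e4 : wd v * (FreeMonoid.of h * FreeMonoid.of g)
          = wd (v ++ [h]) * FreeMonoid.of g := by simp [mul_assoc]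
      rw [e1]
      refine ctrans (mulL _ (csymm h1)) ?_
      rw [e2]
      refine ctrans (mulR _ IH) ?_
      rw [e3]
      refine ctrans (mulL _ h1) ?_
      rw [e4]
      exact (HKCon (arrKn n)).refl _

end HKFib

section Part2
namespace HKFib

variable {n : ℕ}

/-! ### order of letters in a word -/

def Bef {n : ℕ} (w : List (Fin n)) (a b : Fin n) : Prop := [a, b].Sublist w

lemma bef_total {w : List (Fin n)} (hnd : w.Nodup) {a b : Fin n}
    (ha : a ∈ w) (hb : b ∈ w) (hne : a ≠ b) : Bef w a b ∨ Bef w b a := by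
  induction w with
  | nil => simp at ha
  | cons x tl IH =>
    rcases List.mem_cons.mp ha with rfl | ha'
    · left
      exact List.cons_sublist_cons.mpr (List.singleton_sublist.mpr
        (List.mem_cons.mp hb |>.resolve_left (fun h => hne h.symm)))
    · rcases List.mem_cons.mp hb with rfl | hb'
      · right
        exact List.cons_sublist_cons.mpr (List.singleton_sublist.mpr ha')
      · rcases IH (List.nodup_cons.mp hnd).2 ha' hb' with h | h
        · exact Or.inl (h.cons x)
        · exact Or.inr (h.cons x)

lemma pair_sublist_cons {x a b : Fin n} {tl : List (Fin n)}
    (h : Bef (x :: tl) a b) : (x = a ∧ [b].Sublist tl) ∨ Bef tl a b := by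
  cases h with
  | cons _ h => exact Or.inr h
  | cons_cons _ h => exact Or.inl ⟨rfl, h⟩

lemma bef_asymm {w : List (Fin n)} (hnd : w.Nodup) {a b : Fin n} (hne : a ≠ b)
    (h1 : Bef w a b) : ¬ Bef w b a := by
  induction w with
  | nil => intro h; simpa using h.length_le
  | cons x tl IH =>
    intro h2
    rcases pair_sublist_cons h1 with ⟨rfl, hb⟩ | h1'
    · rcases pair_sublist_cons h2 with ⟨hxb, _⟩ | h2'
      · exact hne hxb
      · exact (List.nodup_cons.mp hnd).1 (h2'.subset (by simp))
    · rcases pair_sublist_cons h2 with ⟨rfl, ha⟩ | h2'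
      · exact (List.nodup_cons.mp hnd).1 (h1'.subset (by simp))
      · exact IH (List.nodup_cons.mp hnd).2 h1' h2'

lemma bef_flip {w : List (Fin n)} (hnd : w.Nodup) {a b : Fin n}
    (ha : a ∈ w) (hb : b ∈ w) (hne : a ≠ b) : Bef w a b ↔ ¬ Bef w b a := by
  constructor
  · exact bef_asymm hnd hne
  · intro h
    exact (bef_total hnd ha hb hne).resolve_right h

lemma bef_filter {w : List (Fin n)} {a b g : Fin n} (ha : a ≠ g) (hb : b ≠ g) :
    Bef (w.filter (fun x => !decide (x = g))) a b ↔ Bef w a b := by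
  constructor
  · intro h; exact h.trans List.filter_sublist
  · intro h
    have h2 := h.filter (fun x => !decide (x = g))
    simpa [Bef, ha, hb] using h2

lemma filter_ne_of_not_mem {l : List (Fin n)} {g : Fin n} (h : g ∉ l) :
    l.filter (fun x => !decide (x = g)) = l :=
  List.filter_eq_self.mpr (fun a ha => by simp; rintro rfl; exact h ha)

lemma filter_mid {u v : List (Fin n)} {g : Fin n} (hu : g ∉ u) (hv : g ∉ v) :
    (u ++ g :: v).filter (fun x => !decide (x = g)) = u ++ v := by
  rw [List.filter_append, List.filter_cons]
  simp [filter_ne_of_not_mem hu, filter_ne_of_not_mem hv]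

lemma filter_last {y : List (Fin n)} {g : Fin n} (hy : g ∉ y) :
    (y ++ [g]).filter (fun x => !decide (x = g)) = y := by
  rw [List.filter_append]
  simp [filter_ne_of_not_mem hy]

/-! ### pulling a letter to the front -/

lemma pull_front {g : Fin n} : ∀ (u : List (Fin n)) (v : List (Fin n)),
    (∀ b ∈ u, ¬ Adj b g) →
    HKCon (arrKn n) (wd (u ++ g :: v)) (FreeMonoid.of g * wd (u ++ v))
  | [], v, _ => by simp; exact (HKCon (arrKn n)).refl _
  | b :: u, v, hu => by
    have IH := pull_front u v (fun x hx => hu x (List.mem_cons_of_mem b hx))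
    have h1 : HKCon (arrKn n) (wd (b :: (u ++ g :: v)))
        (FreeMonoid.of b * (FreeMonoid.of g * wd (u ++ v))) := by
      rw [wd_cons]
      exact mulL _ IH
    refine ctrans h1 ?_
    have h2 := comm (hu b List.mem_cons_self)
    have e1 : FreeMonoid.of b * (FreeMonoid.of g * wd (u ++ v))
        = (FreeMonoid.of b * FreeMonoid.of g) * wd (u ++ v) := by simp [mul_assoc]
    have e2 : (FreeMonoid.of g * FreeMonoid.of b) * wd (u ++ v)
        = FreeMonoid.of g * wd (b :: (u ++ v)) := by simp [mul_assoc]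
    rw [e1]
    refine ctrans (mulR _ h2) ?_
    rw [e2]
    exact (HKCon (arrKn n)).refl _

/-! ### trace equivalence implies congruence -/

lemma trace_congr : ∀ (w' w : List (Fin n)), w.Nodup → w'.Nodup →
    (∀ v, v ∈ w ↔ v ∈ w') →
    (∀ a b : Fin n, Adj a b → a ∈ w → b ∈ w → (Bef w a b ↔ Bef w' a b)) →
    HKCon (arrKn n) (wd w) (wd w')
  | [], w, hnd, hnd', hmem, _ => by
    have : w = [] := List.eq_nil_iff_forall_not_mem.mpr (fun x hx => by
      simpa using (hmem x).mp hx)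
    subst this
    exact (HKCon (arrKn n)).refl _
  | a :: v', w, hnd, hnd', hmem, hbef => by
    have ha : a ∈ w := (hmem a).mpr List.mem_cons_self
    obtain ⟨u, v, rfl⟩ := List.mem_iff_append.mp ha
    have hnu : a ∉ u ∧ a ∉ v ∧ u.Nodup ∧ v.Nodup ∧ (∀ x ∈ u, x ∉ v) := by
      rw [List.nodup_append] at hnd
      obtain ⟨h1, h2, h3⟩ := hnd
      rw [List.nodup_cons] at h2
      refine ⟨fun hc => h3 a hc a List.mem_cons_self rfl, h2.1, h1, h2.2, ?_⟩
      intro x hx hx2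
      exact h3 x hx x (List.mem_cons_of_mem a hx2) rfl
    have hnd'' : (u ++ v).Nodup := by
      rw [List.nodup_append]
      exact ⟨hnu.2.2.1, hnu.2.2.2.1, fun x hx y hy hxy => hnu.2.2.2.2 x hx (by subst hxy; exact hy)⟩
    have hav' : a ∉ v' := (List.nodup_cons.mp hnd').1
    have hvnd' : v'.Nodup := (List.nodup_cons.mp hnd').2
    have hmemuv : ∀ x, x ∈ u ++ v ↔ x ∈ v' := by
      intro x
      constructor
      · intro hx
        have hxa : x ≠ a := by
          rintro rfl
          rcases List.mem_append.mp hx with h | h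
          · exact hnu.1 h
          · exact hnu.2.1 h
        have : x ∈ a :: v' := (hmem x).mp (by
          rcases List.mem_append.mp hx with h | h
          · exact List.mem_append.mpr (Or.inl h)
          · exact List.mem_append.mpr (Or.inr (List.mem_cons_of_mem a h)))
        exact (List.mem_cons.mp this).resolve_left hxa
      · intro hx
        have hxa : x ≠ a := fun hc => hav' (hc ▸ hx)
        have : x ∈ u ++ a :: v := (hmem x).mpr (List.mem_cons_of_mem a hx)
        rcases List.mem_append.mp this with h | h
        · exact List.mem_append.mpr (Or.inl h)
        · exact List.mem_append.mpr (Or.inr ((List.mem_cons.mp h).resolve_left hxa))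
    have hcomm : ∀ b ∈ u, ¬ Adj b a := by
      intro b hb hAdj
      have hba : b ≠ a := fun hc => hnu.1 (hc ▸ hb)
      have hbefw : Bef (u ++ a :: v) b a :=
        List.Sublist.append (List.singleton_sublist.mpr hb)
          (List.cons_sublist_cons.mpr (List.nil_sublist v))
      have hbw : b ∈ u ++ a :: v := List.mem_append.mpr (Or.inl hb)
      have := (hbef b a hAdj hbw ha).mp hbefw
      rcases pair_sublist_cons this with ⟨hba', _⟩ | h
      · exact hba hba'.symm
      · exact hav' (h.subset (by simp))
    have step1 := pull_front u v hcomm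
    have hbef' : ∀ a' b' : Fin n, Adj a' b' → a' ∈ u ++ v → b' ∈ u ++ v →
        (Bef (u ++ v) a' b' ↔ Bef v' a' b') := by
      intro a' b' hAdj ha' hb'
      have ha'a : a' ≠ a := by rintro rfl; exact absurd ha' (by
        intro hc
        rcases List.mem_append.mp hc with h | h
        · exact hnu.1 h
        · exact hnu.2.1 h)
      have hb'a : b' ≠ a := by rintro rfl; exact absurd hb' (by
        intro hc
        rcases List.mem_append.mp hc with h | h
        · exact hnu.1 h
        · exact hnu.2.1 h)
      have e1 : (u ++ a :: v).filter (fun x => !decide (x = a)) = u ++ v :=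
        filter_mid hnu.1 hnu.2.1
      have e2 : (a :: v').filter (fun x => !decide (x = a)) = v' := by
        rw [List.filter_cons]
        simp [filter_ne_of_not_mem hav']
      have h1 := bef_filter (w := u ++ a :: v) ha'a hb'a
      rw [e1] at h1
      have h2 := bef_filter (w := a :: v') ha'a hb'a
      rw [e2] at h2
      rw [h1, h2]
      exact hbef a' b' hAdj (by
        have := ha'
        rcases List.mem_append.mp this with h | h
        · exact List.mem_append.mpr (Or.inl h)
        · exact List.mem_append.mpr (Or.inr (List.mem_cons_of_mem a h)))
        (by
        rcases List.mem_append.mp hb' with h | h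
        · exact List.mem_append.mpr (Or.inl h)
        · exact List.mem_append.mpr (Or.inr (List.mem_cons_of_mem a h)))
    have IH := trace_congr v' (u ++ v) hnd'' hvnd' hmemuv hbef'
    refine ctrans step1 ?_
    rw [wd_cons]
    exact mulL _ IH

end HKFib
end Part2

section Part3
namespace HKFib

variable {n : ℕ}

/-! ### data: support + edge orientations -/

def Induced {n : ℕ} (s : Fin n → Bool) (i : Fin n) : Prop :=
  ∃ j : Fin n, (j : ℕ) = (i : ℕ) + 1 ∧ s i = true ∧ s j = true

instance : ∀ (s : Fin n → Bool) (i : Fin n), Decidable (Induced s i) := fun s i =>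
  inferInstanceAs (Decidable (∃ j : Fin n, _ ∧ _ ∧ _))

def Inv {n : ℕ} (p : (Fin n → Bool) × (Fin n → Bool)) : Prop :=
  ∀ i, p.2 i = true → Induced p.1 i

instance : ∀ p : (Fin n → Bool) × (Fin n → Bool), Decidable (Inv p) := fun p =>
  inferInstanceAs (Decidable (∀ i, _ → _))

def Dat (n : ℕ) : Type := {p : (Fin n → Bool) × (Fin n → Bool) // Inv p}

instance : Fintype (Dat n) := Subtype.fintype _

/-- integer rank of each position, so that sorting by rank realizes the orientations -/
def rk (d : Dat n) : ℕ → ℤ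
  | 0 => 0
  | k + 1 => rk d k +
      (if h : k < n then
        (if d.val.2 ⟨k, h⟩ = true then 1 else if Induced d.val.1 ⟨k, h⟩ then -1 else 1)
      else 1)

def key (d : Dat n) (v : Fin n) : ℤ := rk d v.val * n + v.val

def ord (d : Dat n) (a b : Fin n) : Prop :=
  key d a < key d b ∨ (key d a = key d b ∧ a.val ≤ b.val)

instance (d : Dat n) : DecidableRel (ord d) := fun a b => by
  unfold ord; infer_instance

lemma ord_trans (d : Dat n) : ∀ a b c : Fin n, ord d a b → ord d b c → ord d a c := by
  intro a b c h1 h2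
  rcases h1 with h1 | ⟨h1, h1'⟩ <;> rcases h2 with h2 | ⟨h2, h2'⟩ <;>
    first
      | exact Or.inl (by omega)
      | exact Or.inr ⟨by omega, by omega⟩

lemma ord_antisymm (d : Dat n) : ∀ a b : Fin n, ord d a b → ord d b a → a = b := by
  intro a b h1 h2
  rcases h1 with h1 | ⟨h1, h1'⟩ <;> rcases h2 with h2 | ⟨h2, h2'⟩ <;>
    first
      | omega
      | exact Fin.ext (by omega)

lemma ord_total (d : Dat n) : ∀ a b : Fin n, ord d a b ∨ ord d b a := by
  intro a b
  unfold ord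
  rcases lt_trichotomy (key d a) (key d b) with h | h | h
  · exact Or.inl (Or.inl h)
  · rcases Nat.le_total a.val b.val with h' | h'
    · exact Or.inl (Or.inr ⟨h, h'⟩)
    · exact Or.inr (Or.inr ⟨h.symm, h'⟩)
  · exact Or.inr (Or.inl h)

instance instOrdTrans (d : Dat n) : IsTrans (Fin n) (ord d) := ⟨ord_trans d⟩
instance instOrdAntisymm (d : Dat n) : IsAntisymm (Fin n) (ord d) := ⟨ord_antisymm d⟩
instance instOrdTotal (d : Dat n) : IsTotal (Fin n) (ord d) := ⟨ord_total d⟩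

/-- the canonical word of a datum -/
def wrd (d : Dat n) : List (Fin n) :=
  (Finset.univ.filter (fun v => d.val.1 v = true)).sort (ord d)

lemma wrd_nodup (d : Dat n) : (wrd d).Nodup := Finset.sort_nodup _ _

lemma wrd_mem {d : Dat n} {v : Fin n} : v ∈ wrd d ↔ d.val.1 v = true := by
  unfold wrd
  rw [Finset.mem_sort, Finset.mem_filter]
  simp

lemma wrd_sorted (d : Dat n) : List.Pairwise (ord d) (wrd d) := Finset.pairwise_sort _ _

lemma bef_ord {d : Dat n} {a b : Fin n} (h : Bef (wrd d) a b) : ord d a b := by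
  have h2 := (wrd_sorted d).sublist h
  exact List.rel_of_pairwise_cons h2 (List.mem_singleton_self b)

lemma rk_succ {d : Dat n} {i : Fin n} (hi : (i : ℕ) + 1 < n)
    (h1 : d.val.1 i = true) (h2 : d.val.1 ⟨(i : ℕ) + 1, hi⟩ = true) :
    rk d ((i : ℕ) + 1) = rk d i.val + (if d.val.2 i = true then 1 else -1) := by
  have hlt : (i : ℕ) < n := i.isLt
  have hInd : Induced d.val.1 i := ⟨⟨(i : ℕ) + 1, hi⟩, rfl, h1, h2⟩
  show rk d (i.val + 1) = _
  rw [rk]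
  rw [dif_pos hlt]
  by_cases ho : d.val.2 ⟨i.val, hlt⟩ = true
  · rw [if_pos ho]
    have : (⟨i.val, hlt⟩ : Fin n) = i := Fin.ext rfl
    rw [this] at ho
    rw [if_pos ho]
  · rw [if_neg ho]
    have he : (⟨i.val, hlt⟩ : Fin n) = i := Fin.ext rfl
    rw [he] at ho
    rw [if_neg ho, if_pos (by rw [he]; exact hInd)]

/-- orientation is realized in the canonical word -/
lemma wrd_bef_iff {d : Dat n} {i : Fin n} (hi : (i : ℕ) + 1 < n)
    (h1 : d.val.1 i = true) (h2 : d.val.1 ⟨(i : ℕ) + 1, hi⟩ = true) :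
    Bef (wrd d) i ⟨(i : ℕ) + 1, hi⟩ ↔ d.val.2 i = true := by
  set i' : Fin n := ⟨(i : ℕ) + 1, hi⟩ with hi'
  have hne : i ≠ i' := by
    intro h; apply_fun Fin.val at h; simp [hi'] at h
  have hmi : i ∈ wrd d := wrd_mem.mpr h1
  have hmi' : i' ∈ wrd d := wrd_mem.mpr h2
  have hrk := rk_succ hi h1 h2
  have hn0 : (0 : ℤ) < (n : ℤ) := by
    have := i.isLt; omega
  by_cases ho : d.val.2 i = true
  · rw [if_pos ho] at hrk
    have hkey : key d i < key d i' := by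
      unfold key
      have : (i' : ℕ) = (i : ℕ) + 1 := rfl
      rw [this, hrk]
      have e : (rk d i.val + 1) * n = rk d i.val * n + n := by ring
      rw [e]
      push_cast
      omega
    simp only [ho, iff_true]
    rcases bef_total (wrd_nodup d) hmi hmi' hne with h | h
    · exact h
    · exfalso
      rcases bef_ord h with h' | ⟨h', _⟩ <;> omega
  · rw [if_neg ho] at hrk
    have hn2 : 1 < (n : ℤ) := by
      have := hi; omega
    have hkey : key d i' < key d i := by
      unfold key
      have : (i' : ℕ) = (i : ℕ) + 1 := rfl
      rw [this, hrk]
      have e : (rk d i.val + -1) * n = rk d i.val * n - n := by ring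
      rw [e]
      push_cast
      omega
    constructor
    · intro hB
      exfalso
      rcases bef_ord hB with h' | ⟨h', _⟩ <;> omega
    · intro hc; exact absurd hc ho

/-! ### the action on data -/

def act (g : Fin n) (d : Dat n) : Dat n :=
  if d.val.1 g = true ∧ Even (g : ℕ) then d
  else
    ⟨(Function.update d.val.1 g true,
      fun i : Fin n => if (i : ℕ) + 1 = (g : ℕ) then d.val.1 i
               else if i = g then false else d.val.2 i), by
      intro i hi
      dsimp only at hi ⊢
      by_cases h1 : (i : ℕ) + 1 = (g : ℕ)
      · rw [if_pos h1] at hi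
        have hig : i ≠ g := by
          intro h; apply_fun Fin.val at h; omega
        have hlt : (i : ℕ) + 1 < n := by rw [h1]; exact g.isLt
        refine ⟨⟨(i : ℕ) + 1, hlt⟩, rfl, ?_, ?_⟩
        · rw [Function.update_apply, if_neg hig]; exact hi
        · have : (⟨(i : ℕ) + 1, hlt⟩ : Fin n) = g := Fin.ext h1
          rw [this, Function.update_self]
      · rw [if_neg h1] at hi
        by_cases h2 : i = g
        · rw [if_pos h2] at hi; exact absurd hi (by simp)
        · rw [if_neg h2] at hi
          obtain ⟨j, hj1, hj2, hj3⟩ := d.prop i hi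
          refine ⟨j, hj1, ?_, ?_⟩
          · rw [Function.update_apply]
            split <;> simp [hj2]
          · rw [Function.update_apply]
            split <;> simp [hj3]⟩

lemma act_eq_self {g : Fin n} {d : Dat n} (h : d.val.1 g = true ∧ Even (g : ℕ)) :
    act g d = d := by unfold act; exact if_pos h

lemma act_val {g : Fin n} {d : Dat n} (h : ¬ (d.val.1 g = true ∧ Even (g : ℕ))) :
    (act g d).val = (Function.update d.val.1 g true,
      fun i : Fin n => if (i : ℕ) + 1 = (g : ℕ) then d.val.1 i
               else if i = g then false else d.val.2 i) := by
  unfold act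
  exact congrArg Subtype.val (if_neg h)

end HKFib
end Part3

section Part4
namespace HKFib

variable {n : ℕ}

lemma wrd_bef_iff' {d : Dat n} {p q : Fin n} (hpq : (p : ℕ) + 1 = (q : ℕ))
    (h1 : d.val.1 p = true) (h2 : d.val.1 q = true) :
    Bef (wrd d) p q ↔ d.val.2 p = true := by
  have hi : (p : ℕ) + 1 < n := by rw [hpq]; exact q.isLt
  have hq : (⟨(p : ℕ) + 1, hi⟩ : Fin n) = q := Fin.ext hpq
  rw [← hq] at h2 ⊢
  exact wrd_bef_iff hi h1 h2

lemma adj_ne {a b : Fin n} (h : Adj a b) : a ≠ b := by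
  rintro rfl
  rcases h with h | h <;> omega

lemma trace_to_act {g : Fin n} {d : Dat n} (hcond : ¬ (d.val.1 g = true ∧ Even (g : ℕ)))
    {y : List (Fin n)} (hnd : y.Nodup) (hgy : g ∉ y)
    (hmem : ∀ x, x ∈ y ↔ (d.val.1 x = true ∧ x ≠ g))
    (hbef : ∀ a b : Fin n, a ∈ y → b ∈ y → (Bef y a b ↔ Bef (wrd d) a b)) :
    HKCon (arrKn n) (wd (y ++ [g])) (wd (wrd (act g d))) := by
  set A := act g d with hA
  have hA1 : A.val.1 = Function.update d.val.1 g true := by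
    rw [hA, act_val hcond]
  have hA2 : A.val.2 = fun i : Fin n =>
      if (i : ℕ) + 1 = (g : ℕ) then d.val.1 i
      else if i = g then false else d.val.2 i := by
    rw [hA, act_val hcond]
  have presA : ∀ x : Fin n, x = g ∨ d.val.1 x = true → A.val.1 x = true := by
    intro x hx
    rw [hA1, Function.update_apply]
    rcases hx with rfl | hx
    · simp
    · split <;> simp [hx]
  have hndy : (y ++ [g]).Nodup := by
    rw [List.nodup_append]
    refine ⟨hnd, List.nodup_singleton g, ?_⟩
    intro x hx hx2 hy
    rw [List.mem_singleton] at hy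
    subst hy
    exact ((hmem x).mp hx).2
  have hmemA : ∀ x : Fin n, x ∈ y ++ [g] ↔ x ∈ wrd A := by
    intro x
    rw [List.mem_append, List.mem_singleton, wrd_mem, hA1, Function.update_apply]
    by_cases hx : x = g
    · simp [hx]
    · simp only [hx, if_false, or_false, hmem x]
      simp [hx]
  apply trace_congr _ _ hndy (wrd_nodup A) hmemA
  intro a b hAdj haM hbM
  have hab : a ≠ b := adj_ne hAdj
  have haA : a ∈ wrd A := (hmemA a).mp haM
  have hbA : b ∈ wrd A := (hmemA b).mp hbM
  by_cases hag : a = g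
  · subst hag
    by_cases hbg : b = a
    · exact absurd hbg.symm hab
    · -- a = g, b ≠ g ; both sides false
      have hby : b ∈ y := by
        rcases List.mem_append.mp hbM with h | h
        · exact h
        · rw [List.mem_singleton] at h; exact absurd h hbg
      have hLbef : Bef (y ++ [a]) b a :=
        List.Sublist.append (List.singleton_sublist.mpr hby) (List.Sublist.refl [a])
      have hL : ¬ Bef (y ++ [a]) a b := bef_asymm hndy hbg hLbef
      have hR : ¬ Bef (wrd A) a b := by
        rcases hAdj with h | h
        · -- a.val + 1 = b.val : edge a, o' a = false
          have hoA : A.val.2 a = false := by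
            rw [hA2]
            simp only
            rw [if_neg (by omega)]
            simp
          intro hc
          have := (wrd_bef_iff' h (presA a (Or.inl rfl)) (presA b (Or.inr ((hmem b).mp hby).1))).mp hc
          rw [hoA] at this; exact absurd this (by simp)
        · -- b.val + 1 = a.val : edge b, o' b = d.1 b = true so Bef b a holds
          have hoA : A.val.2 b = true := by
            rw [hA2]
            simp only
            rw [if_pos h]
            exact ((hmem b).mp hby).1
          have hBef := (wrd_bef_iff' h (presA b (Or.inr ((hmem b).mp hby).1))
            (presA a (Or.inl rfl))).mpr hoA
          exact bef_asymm (wrd_nodup A) hbg hBef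
      exact iff_of_false hL hR
  · by_cases hbg : b = g
    · subst hbg
      have hay : a ∈ y := by
        rcases List.mem_append.mp haM with h | h
        · exact h
        · rw [List.mem_singleton] at h; exact absurd h hag
      have hL : Bef (y ++ [b]) a b :=
        List.Sublist.append (List.singleton_sublist.mpr hay) (List.Sublist.refl [b])
      have hR : Bef (wrd A) a b := by
        rcases hAdj with h | h
        · have hoA : A.val.2 a = true := by
            rw [hA2]
            simp only
            rw [if_pos h]
            exact ((hmem a).mp hay).1
          exact (wrd_bef_iff' h (presA a (Or.inr ((hmem a).mp hay).1))
            (presA b (Or.inl rfl))).mpr hoA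
        · -- b.val + 1 = a.val : edge b = g, o' b = false so ¬ Bef b a, use totality
          have hoA : A.val.2 b = false := by
            rw [hA2]
            simp only
            rw [if_neg (by omega)]
            simp
          have hnB : ¬ Bef (wrd A) b a := by
            intro hc
            have := (wrd_bef_iff' h (presA b (Or.inl rfl))
              (presA a (Or.inr ((hmem a).mp hay).1))).mp hc
            rw [hoA] at this; exact absurd this (by simp)
          exact (bef_total (wrd_nodup A) haA hbA hab).resolve_right
            (fun hc => hnB hc)
      exact iff_of_true hL hR
    · -- both ≠ g
      have hay : a ∈ y := by
        rcases List.mem_append.mp haM with h | h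
        · exact h
        · rw [List.mem_singleton] at h; exact absurd h hag
      have hby : b ∈ y := by
        rcases List.mem_append.mp hbM with h | h
        · exact h
        · rw [List.mem_singleton] at h; exact absurd h hbg
      have hda : d.val.1 a = true := ((hmem a).mp hay).1
      have hdb : d.val.1 b = true := ((hmem b).mp hby).1
      have h1 := bef_filter (w := y ++ [g]) hag hbg (a := a) (b := b)
      rw [filter_last hgy] at h1
      have h2 : Bef y a b ↔ Bef (wrd d) a b := hbef a b hay hby
      have haD : a ∈ wrd d := wrd_mem.mpr hda
      have hbD : b ∈ wrd d := wrd_mem.mpr hdb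
      have h3 : Bef (wrd d) a b ↔ Bef (wrd A) a b := by
        rcases hAdj with h | h
        · have hoA : A.val.2 a = d.val.2 a := by
            rw [hA2]
            simp only
            rw [if_neg (by
              intro hc
              exact hbg (Fin.ext (by omega))), if_neg hag]
          rw [wrd_bef_iff' h hda hdb,
            wrd_bef_iff' h (presA a (Or.inr hda)) (presA b (Or.inr hdb)), hoA]
        · have hoA : A.val.2 b = d.val.2 b := by
            rw [hA2]
            simp only
            rw [if_neg (by
              intro hc
              exact hag (Fin.ext (by omega))), if_neg hbg]
          rw [bef_flip (wrd_nodup d) haD hbD hab,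
            bef_flip (wrd_nodup A) haA hbA hab,
            wrd_bef_iff' h hdb hda,
            wrd_bef_iff' h (presA b (Or.inr hdb)) (presA a (Or.inr hda)), hoA]
      rw [← h1, h2, h3]

lemma key_step (d : Dat n) (g : Fin n) :
    HKCon (arrKn n) (wd (wrd d) * FreeMonoid.of g) (wd (wrd (act g d))) := by
  by_cases hp : d.val.1 g = true ∧ Even (g : ℕ)
  · rw [act_eq_self hp]
    obtain ⟨u, v, huv⟩ := List.mem_iff_append.mp (wrd_mem.mpr hp.1)
    rw [huv]
    have e1 : wd (u ++ g :: v) * FreeMonoid.of g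
        = wd u * (FreeMonoid.of g * wd v * FreeMonoid.of g) := by
      simp [mul_assoc]
    have e2 : wd u * (FreeMonoid.of g * wd v) = wd (u ++ g :: v) := by
      simp [mul_assoc]
    rw [e1, ← e2]
    exact mulL _ (src_pump hp.2 v)
  · by_cases hg : d.val.1 g = true
    · -- present, odd vertex
      have hodd : ¬ Even (g : ℕ) := fun hc => hp ⟨hg, hc⟩
      obtain ⟨u, v, huv⟩ := List.mem_iff_append.mp (wrd_mem.mpr hg)
      have hnd := wrd_nodup d
      rw [huv] at hnd
      have hnu : g ∉ u ∧ g ∉ v ∧ (u ++ v).Nodup := by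
        rw [List.nodup_append] at hnd
        obtain ⟨n1, n2, n3⟩ := hnd
        rw [List.nodup_cons] at n2
        refine ⟨fun hc => n3 g hc g List.mem_cons_self rfl, n2.1, ?_⟩
        rw [List.nodup_append]
        exact ⟨n1, n2.2, fun x hx y hy hxy => n3 x hx y (List.mem_cons_of_mem g hy) hxy⟩
      have step1 : HKCon (arrKn n) (wd (wrd d) * FreeMonoid.of g) (wd ((u ++ v) ++ [g])) := by
        rw [huv]
        have e1 : wd (u ++ g :: v) * FreeMonoid.of g
            = wd u * (FreeMonoid.of g * wd v * FreeMonoid.of g) := by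
          simp [mul_assoc]
        have e2 : wd u * (wd v * FreeMonoid.of g) = wd ((u ++ v) ++ [g]) := by
          simp [mul_assoc]
        rw [e1, ← e2]
        exact mulL _ (snk_pump hodd v)
      refine ctrans step1 (trace_to_act hp hnu.2.2 ?_ ?_ ?_)
      · intro hc
        rcases List.mem_append.mp hc with h | h
        · exact hnu.1 h
        · exact hnu.2.1 h
      · intro x
        constructor
        · intro hx
          have hxg : x ≠ g := by
            rintro rfl
            rcases List.mem_append.mp hx with h | h
            · exact hnu.1 h
            · exact hnu.2.1 h
          refine ⟨wrd_mem.mp ?_, hxg⟩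
          rw [huv]
          rcases List.mem_append.mp hx with h | h
          · exact List.mem_append.mpr (Or.inl h)
          · exact List.mem_append.mpr (Or.inr (List.mem_cons_of_mem g h))
        · rintro ⟨hx, hxg⟩
          have : x ∈ u ++ g :: v := by rw [← huv]; exact wrd_mem.mpr hx
          rcases List.mem_append.mp this with h | h
          · exact List.mem_append.mpr (Or.inl h)
          · exact List.mem_append.mpr (Or.inr ((List.mem_cons.mp h).resolve_left hxg))
      · intro a b ha hb
        have hag : a ≠ g := by
          rintro rfl
          rcases List.mem_append.mp ha with h | h
          · exact hnu.1 h
          · exact hnu.2.1 h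
        have hbg : b ≠ g := by
          rintro rfl
          rcases List.mem_append.mp hb with h | h
          · exact hnu.1 h
          · exact hnu.2.1 h
        have h1 := bef_filter (w := u ++ g :: v) hag hbg (a := a) (b := b)
        rw [filter_mid hnu.1 hnu.2.1] at h1
        rw [huv]
        exact h1
    · -- absent
      have step0 : wd (wrd d) * FreeMonoid.of g = wd (wrd d ++ [g]) := by simp
      rw [step0]
      refine trace_to_act hp (wrd_nodup d) (fun hc => hg (wrd_mem.mp hc)) ?_ ?_
      · intro x
        rw [wrd_mem]
        constructor
        · intro hx
          exact ⟨hx, by rintro rfl; exact hg hx⟩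
        · exact fun hx => hx.1
      · intro a b _ _
        exact Iff.rfl

/-- every word is congruent to a canonical word -/
lemma reach : ∀ w : List (Fin n), ∃ d : Dat n,
    HKCon (arrKn n) (wd w) (wd (wrd d)) := by
  intro w
  induction w using List.reverseRecOn with
  | nil =>
    refine ⟨⟨(fun _ => false, fun _ => false), fun i hi => by simp at hi⟩, ?_⟩
    have : wrd (⟨(fun _ => false, fun _ => false), fun i hi => by simp at hi⟩ : Dat n) = [] := by
      rw [List.eq_nil_iff_forall_not_mem]
      intro x hx
      have := wrd_mem.mp hx
      simp at this
    rw [this]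
    exact (HKCon (arrKn n)).refl _
  | append_singleton w g IH =>
    obtain ⟨d, hd⟩ := IH
    refine ⟨act g d, ?_⟩
    have e1 : wd (w ++ [g]) = wd w * FreeMonoid.of g := by simp
    rw [e1]
    exact ctrans (mulR _ hd) (key_step d g)

end HKFib
end Part4

section Part5
namespace HKFib

variable {n : ℕ}

/-! ### representations -/

def Fm : Function.End (Fin 3) := ![0, 0, 2]
def Gm : Function.End (Fin 3) := ![0, 1, 1]

instance : DecidableEq (Function.End (Fin 3)) :=
  fun f g => decidable_of_iff (∀ x : Fin 3, (show Fin 3 → Fin 3 from f) x = (show Fin 3 → Fin 3 from g) x) funext_iff.symm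

instance : DecidableEq (Function.End Bool) :=
  fun f g => decidable_of_iff (∀ x : Bool, (show Bool → Bool from f) x = (show Bool → Bool from g) x) funext_iff.symm

/-- support detector at vertex `t` -/
def simg (t : Fin n) : Fin n → Function.End Bool :=
  fun v => if v = t then (fun _ => true) else 1

/-- edge detector at edge `(e, e+1)` -/
def eimg (e : Fin n) : Fin n → Function.End (Fin 3) :=
  fun v =>
    if (v : ℕ) = (e : ℕ) then (if Even (e : ℕ) then Fm else Gm)
    else if (v : ℕ) = (e : ℕ) + 1 then (if Even (e : ℕ) then Gm else Fm)
    else 1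

lemma sker (t : Fin n) :
    HKCon (arrKn n) ≤ Con.ker (FreeMonoid.lift (simg t)) := by
  apply Con.conGen_le.mpr
  rintro x y (⟨u⟩ | ⟨s', t'⟩ | ⟨s', t', h⟩) <;>
    · simp only [Con.ker_rel, map_mul, FreeMonoid.lift_eval_of]
      unfold simg
      split_ifs <;> simp only [*, ↓reduceIte] <;> (try split_ifs <;> simp only [*, ↓reduceIte]) <;> rfl

lemma eker (e : Fin n) :
    HKCon (arrKn n) ≤ Con.ker (FreeMonoid.lift (eimg e)) := by
  apply Con.conGen_le.mpr
  rintro x y (⟨u⟩ | ⟨s', t'⟩ | ⟨s', t', h⟩) <;>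
    simp only [Con.ker_rel, map_mul, FreeMonoid.lift_eval_of] <;>
    unfold eimg <;>
    split_ifs <;>
    first
      | decide
      | (exfalso
         exact h (arrKn_iff.mpr ⟨by unfold Adj; omega,
           by simp only [Nat.even_iff] at *; omega⟩))

/-! ### evaluation of the representations on words -/

lemma lift_wd {M : Type} [Monoid M] (f : Fin n → M) (l : List (Fin n)) :
    FreeMonoid.lift f (wd l) = (l.map f).prod := by
  induction l with
  | nil => simp [wd]
  | cons a l IH => rw [wd_cons, map_mul, FreeMonoid.lift_eval_of, List.map_cons,
      List.prod_cons, IH]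

lemma prod_simg_false {l : List (Fin n)} {t : Fin n} :
    ((l.map (simg t)).prod : Function.End Bool) false = decide (t ∈ l) := by
  induction l with
  | nil => rfl
  | cons h tl IH =>
    rw [List.map_cons, List.prod_cons]
    show simg t h ((tl.map (simg t)).prod false) = _
    rw [IH]
    unfold simg
    by_cases hh : h = t
    · subst hh; simp
    · simp only [hh, ↓reduceIte]
      show decide (t ∈ tl) = decide (t ∈ h :: tl)
      simp only [List.mem_cons, decide_eq_decide]
      exact (or_iff_right (fun hc : t = h => hh hc.symm)).symm

lemma prod_filter_eq {M : Type} [Monoid M] (f : Fin n → M) (p : Fin n → Bool)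
    (hf : ∀ v, p v = false → f v = 1) (l : List (Fin n)) :
    (l.map f).prod = ((l.filter p).map f).prod := by
  induction l with
  | nil => rfl
  | cons a l IH =>
    rw [List.map_cons, List.prod_cons, List.filter_cons]
    cases hp : p a
    · rw [hf a hp, one_mul, IH, if_neg (by simp)]
    · rw [if_pos rfl, List.map_cons, List.prod_cons, IH]

lemma filter_singleton_of {w : List (Fin n)} {a b : Fin n} (p : Fin n → Bool)
    (hp : ∀ x, p x = true ↔ (x = a ∨ x = b))
    (hnd : w.Nodup) (hb : b ∈ w) (ha : a ∉ w) :
    w.filter p = [b] := by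
  induction w with
  | nil => simp at hb
  | cons y tl IH =>
    rw [List.filter_cons]
    have hnd' := List.nodup_cons.mp hnd
    by_cases hy : y = b
    · rw [if_pos (by rw [(hp y)]; exact Or.inr hy)]
      have : tl.filter p = [] := by
        rw [List.filter_eq_nil_iff]
        intro x hx hc
        rcases (hp x).mp hc with rfl | rfl
        · exact ha (List.mem_cons_of_mem y hx)
        · exact hnd'.1 (hy ▸ hx)
      rw [this, hy]
    · have hya : y ≠ a := by rintro rfl; exact ha List.mem_cons_self
      have hpy : ¬ p y = true := by
        intro hc
        rcases (hp y).mp hc with h | h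
        · exact hya h
        · exact hy h
      rw [if_neg hpy]
      exact IH hnd'.2 ((List.mem_cons.mp hb).resolve_left (fun hc => hy hc.symm))
        (fun hc => ha (List.mem_cons_of_mem y hc))

lemma filter_pair_of_bef {w : List (Fin n)} {a b : Fin n} (p : Fin n → Bool)
    (hp : ∀ x, p x = true ↔ (x = a ∨ x = b))
    (hnd : w.Nodup) (ha : a ∈ w) (hb : b ∈ w) (hne : a ≠ b) (hbef : Bef w a b) :
    w.filter p = [a, b] := by
  induction w with
  | nil => simp at ha
  | cons x tl IH =>
    have hnd' := List.nodup_cons.mp hnd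
    rw [List.filter_cons]
    by_cases hx : x = a
    · rw [if_pos (by rw [(hp x)]; exact Or.inl hx)]
      have hbtl : b ∈ tl := by
        rcases pair_sublist_cons hbef with ⟨_, h2⟩ | h2
        · exact List.singleton_sublist.mp h2
        · exact absurd (hx ▸ h2.subset (List.mem_cons_self (a := a) (l := [b]))) hnd'.1
      have hatl : a ∉ tl := fun hc => hnd'.1 (hx ▸ hc)
      rw [filter_singleton_of p hp hnd'.2 hbtl hatl, hx]
    · by_cases hx2 : x = b
      · exfalso
        rcases pair_sublist_cons hbef with ⟨h1, _⟩ | h2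
        · exact hx h1
        · exact hnd'.1 (hx2 ▸ h2.subset (by simp))
      · have hpx : ¬ p x = true := by
          intro hc
          rcases (hp x).mp hc with h | h
          · exact hx h
          · exact hx2 h
        rw [if_neg hpx]
        have hbef2 : Bef tl a b := by
          rcases pair_sublist_cons hbef with ⟨h1, _⟩ | h2
          · exact absurd h1 hx
          · exact h2
        exact IH hnd'.2 ((List.mem_cons.mp ha).resolve_left (fun hc => hx hc.symm))
          ((List.mem_cons.mp hb).resolve_left (fun hc => hx2 hc.symm)) hbef2

/-! ### injectivity on canonical words -/

lemma wrd_inj {d d' : Dat n}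
    (h : HKCon (arrKn n) (wd (wrd d)) (wd (wrd d'))) : d = d' := by
  have hs : d.val.1 = d'.val.1 := by
    funext v
    have h1 : FreeMonoid.lift (simg v) (wd (wrd d))
        = FreeMonoid.lift (simg v) (wd (wrd d')) := (Con.ker_rel _).mp (sker v h)
    rw [lift_wd, lift_wd] at h1
    have h2 := congrFun h1 false
    rw [prod_simg_false, prod_simg_false] at h2
    have h3 : v ∈ wrd d ↔ v ∈ wrd d' := by
      constructor <;> intro hx
      · exact of_decide_eq_true (h2 ▸ decide_eq_true hx)
      · exact of_decide_eq_true (h2.symm ▸ decide_eq_true hx)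
    rw [wrd_mem, wrd_mem] at h3
    by_cases hv : d.val.1 v = true
    · rw [hv, (h3.mp hv)]
    · have hv' : ¬ d'.val.1 v = true := fun hc => hv (h3.mpr hc)
      rw [Bool.not_eq_true] at hv hv'
      rw [hv, hv']
  have ho : d.val.2 = d'.val.2 := by
    funext i
    by_cases hInd : Induced d.val.1 i
    · obtain ⟨j, hj1, hp1, hp2⟩ := hInd
      have hp1' : d'.val.1 i = true := by rw [← hs]; exact hp1
      have hp2' : d'.val.1 j = true := by rw [← hs]; exact hp2
      have hij : i ≠ j := by intro hc; apply_fun Fin.val at hc; omega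
      have h1 : FreeMonoid.lift (eimg i) (wd (wrd d))
          = FreeMonoid.lift (eimg i) (wd (wrd d')) := (Con.ker_rel _).mp (eker i h)
      rw [lift_wd, lift_wd] at h1
      set p : Fin n → Bool := fun x => decide (x = i) || decide (x = j) with hpdef
      have hp : ∀ x, p x = true ↔ (x = i ∨ x = j) := by
        intro x; simp [hpdef]
      have hp' : ∀ x, p x = true ↔ (x = j ∨ x = i) := by
        intro x; rw [hp x]; exact or_comm
      have heq : ∀ v, p v = false → eimg i v = 1 := by
        intro v hv
        have hvi : v ≠ i := by rintro rfl; simp [(hp v).mpr (Or.inl rfl)] at hv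
        have hvj : v ≠ j := by rintro rfl; simp [(hp v).mpr (Or.inr rfl)] at hv
        unfold eimg
        rw [if_neg (fun hc => hvi (Fin.ext hc)),
          if_neg (fun hc => hvj (Fin.ext (by omega)))]
      have h1' : (((wrd d).filter p).map (eimg i)).prod
          = (((wrd d').filter p).map (eimg i)).prod := by
        rw [← prod_filter_eq _ _ heq, ← prod_filter_eq _ _ heq]
        exact h1
      have hii : eimg i i = if Even (i : ℕ) then Fm else Gm := by
        unfold eimg; rw [if_pos rfl]
      have hijv : eimg i j = if Even (i : ℕ) then Gm else Fm := by
        unfold eimg; rw [if_neg (by omega), if_pos hj1]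
      by_cases hb : d.val.2 i = true <;> by_cases hb' : d'.val.2 i = true
      · rw [hb, hb']
      · exfalso
        have hB1 : Bef (wrd d) i j := (wrd_bef_iff' hj1.symm hp1 hp2).mpr hb
        have hB2' : Bef (wrd d') j i :=
          (bef_total (wrd_nodup d') (wrd_mem.mpr hp2') (wrd_mem.mpr hp1')
            (Ne.symm hij)).resolve_right
            (fun hc => hb' ((wrd_bef_iff' hj1.symm hp1' hp2').mp hc))
        rw [filter_pair_of_bef p hp (wrd_nodup d) (wrd_mem.mpr hp1)
            (wrd_mem.mpr hp2) hij hB1,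
          filter_pair_of_bef p hp' (wrd_nodup d') (wrd_mem.mpr hp2')
            (wrd_mem.mpr hp1') (Ne.symm hij) hB2'] at h1'
        simp only [List.map_cons, List.map_nil, List.prod_cons, List.prod_nil,
          hii, hijv] at h1'
        split_ifs at h1' <;> exact absurd h1' (by decide)
      · exfalso
        have hB1 : Bef (wrd d') i j := (wrd_bef_iff' hj1.symm hp1' hp2').mpr hb'
        have hB2' : Bef (wrd d) j i :=
          (bef_total (wrd_nodup d) (wrd_mem.mpr hp2) (wrd_mem.mpr hp1)
            (Ne.symm hij)).resolve_right
            (fun hc => hb ((wrd_bef_iff' hj1.symm hp1 hp2).mp hc))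
        rw [filter_pair_of_bef p hp' (wrd_nodup d) (wrd_mem.mpr hp2)
            (wrd_mem.mpr hp1) (Ne.symm hij) hB2',
          filter_pair_of_bef p hp (wrd_nodup d') (wrd_mem.mpr hp1')
            (wrd_mem.mpr hp2') hij hB1] at h1'
        simp only [List.map_cons, List.map_nil, List.prod_cons, List.prod_nil,
          hii, hijv] at h1'
        split_ifs at h1' <;> exact absurd h1' (by decide)
      · rw [Bool.not_eq_true] at hb hb'
        rw [hb, hb']
    · have hInd' : ¬ Induced d'.val.1 i := by rw [← hs]; exact hInd
      have hv : ¬ d.val.2 i = true := fun hc => hInd (d.prop i hc)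
      have hv' : ¬ d'.val.2 i = true := fun hc => hInd' (d'.prop i hc)
      rw [Bool.not_eq_true] at hv hv'
      rw [hv, hv']
  exact Subtype.ext (Prod.ext hs ho)

end HKFib
end Part5

section Part6
namespace HKFib

variable {n : ℕ}

lemma toList_wd (l : List (Fin n)) : FreeMonoid.toList (wd l) = l := by
  induction l with
  | nil => rfl
  | cons a l IH => rw [wd_cons, FreeMonoid.toList_mul, IH]; rfl

lemma wd_toList (w : FreeMonoid (Fin n)) : wd (FreeMonoid.toList w) = w := by
  apply FreeMonoid.toList.injective
  rw [toList_wd]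

lemma card_hk_eq_card_dat (n : ℕ) :
    Nat.card (HK (arrKn n)) = Nat.card (Dat n) := by
  symm
  apply Nat.card_eq_of_bijective (fun d : Dat n => (HKCon (arrKn n)).mk' (wd (wrd d)))
  constructor
  · intro d d' hdd
    exact wrd_inj ((Con.eq _).mp hdd)
  · intro x
    obtain ⟨w, rfl⟩ := Con.mk'_surjective x
    obtain ⟨d, hd⟩ := reach (FreeMonoid.toList w)
    rw [wd_toList] at hd
    exact ⟨d, ((Con.eq _).mpr hd).symm⟩

/-! ### counting -/

def PDat (n : ℕ) : Type := {d : Dat (n + 1) // d.val.1 (Fin.last n) = true}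

instance : Fintype (PDat n) := Subtype.fintype _

def res (d : Dat (n + 2)) : Dat (n + 1) :=
  ⟨(fun i => d.val.1 i.castSucc,
    fun i => if (i : ℕ) = n then false else d.val.2 i.castSucc), by
    intro i hi
    dsimp only at hi ⊢
    by_cases hn : (i : ℕ) = n
    · rw [if_pos hn] at hi; exact absurd hi (by simp)
    · rw [if_neg hn] at hi
      obtain ⟨j, hj, h1, h2⟩ := d.prop i.castSucc hi
      rw [Fin.coe_castSucc] at hj
      have hjlt : (j : ℕ) < n + 1 := by
        have := i.isLt
        omega
      refine ⟨⟨(j : ℕ), hjlt⟩, by simpa using hj, h1, ?_⟩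
      have he : (⟨(j : ℕ), hjlt⟩ : Fin (n + 1)).castSucc = j := Fin.ext rfl
      show d.val.1 (⟨(j : ℕ), hjlt⟩ : Fin (n + 1)).castSucc = true
      rw [he]; exact h2⟩

def ext (t : Dat (n + 1)) (b c : Bool)
    (hc : c = true → t.val.1 (Fin.last n) = true ∧ b = true) : Dat (n + 2) :=
  ⟨(Fin.snoc t.val.1 b,
    fun i : Fin (n + 2) => if h : (i : ℕ) < n + 1 then
        (if (i : ℕ) = n then c else t.val.2 ⟨(i : ℕ), h⟩) else false), by
    intro i hi
    dsimp only at hi ⊢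
    by_cases h : (i : ℕ) < n + 1
    · rw [dif_pos h] at hi
      by_cases hn : (i : ℕ) = n
      · rw [if_pos hn] at hi
        obtain ⟨hl, hb⟩ := hc hi
        have hlt : (i : ℕ) + 1 < n + 2 := by omega
        refine ⟨⟨(i : ℕ) + 1, hlt⟩, rfl, ?_, ?_⟩
        · have he : i = (Fin.last n).castSucc := Fin.ext (by simpa using hn)
          rw [he, Fin.snoc_castSucc]
          exact hl
        · have he : (⟨(i : ℕ) + 1, hlt⟩ : Fin (n + 2)) = Fin.last (n + 1) :=
            Fin.ext (by simp [hn])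
          rw [he, Fin.snoc_last]
          exact hb
      · rw [if_neg hn] at hi
        obtain ⟨j, hj, h1, h2⟩ := t.prop _ hi
        have hlt : (i : ℕ) + 1 < n + 2 := by omega
        refine ⟨⟨(i : ℕ) + 1, hlt⟩, rfl, ?_, ?_⟩
        · have he : i = (⟨(i : ℕ), h⟩ : Fin (n + 1)).castSucc := Fin.ext rfl
          rw [he, Fin.snoc_castSucc]
          exact h1
        · have he : (⟨(i : ℕ) + 1, hlt⟩ : Fin (n + 2)) = j.castSucc :=
            Fin.ext (by simp at hj ⊢; omega)
          rw [he, Fin.snoc_castSucc]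
          exact h2
    · rw [dif_neg h] at hi; exact absurd hi (by simp)⟩

lemma snd_last_eq_false (t : Dat (n + 1)) {i : Fin (n + 1)} (hn : (i : ℕ) = n) :
    t.val.2 i = false := by
  rw [← Bool.not_eq_true]
  intro hc
  obtain ⟨j, hj, _, _⟩ := t.prop i hc
  have := j.isLt
  omega

lemma res_ext (t : Dat (n + 1)) (b c : Bool) (hc) :
    res (ext t b c hc) = t := by
  apply Subtype.ext
  apply Prod.ext
  · funext i
    show (Fin.snoc t.val.1 b : Fin (n+2) → Bool) i.castSucc = _
    rw [Fin.snoc_castSucc]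
  · funext i
    show (if (i : ℕ) = n then false
      else (ext t b c hc).val.2 i.castSucc) = t.val.2 i
    by_cases hn : (i : ℕ) = n
    · rw [if_pos hn, snd_last_eq_false t hn]
    · rw [if_neg hn]
      show (if h : ((i.castSucc : Fin (n+2)) : ℕ) < n + 1 then
        (if ((i.castSucc : Fin (n+2)) : ℕ) = n then c
          else t.val.2 ⟨((i.castSucc : Fin (n+2)) : ℕ), h⟩) else false) = t.val.2 i
      rw [dif_pos (by rw [Fin.coe_castSucc]; exact i.isLt)]
      rw [if_neg (by rw [Fin.coe_castSucc]; exact hn)]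
      congr 1

lemma snd_top_eq_false (d : Dat (n + 2)) {i : Fin (n + 2)} (hn : (i : ℕ) = n + 1) :
    d.val.2 i = false := by
  rw [← Bool.not_eq_true]
  intro hc
  obtain ⟨j, hj, _, _⟩ := d.prop i hc
  have := j.isLt
  omega

lemma hc_of (d : Dat (n + 2)) (hco : d.val.2 ⟨n, by omega⟩ = true) :
    (res d).val.1 (Fin.last n) = true ∧ d.val.1 (Fin.last (n + 1)) = true := by
  obtain ⟨j, hj, h1, h2⟩ := d.prop _ hco
  constructor
  · show d.val.1 (Fin.last n).castSucc = true
    have he : (Fin.last n).castSucc = (⟨n, by omega⟩ : Fin (n + 2)) := Fin.ext (by simp)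
    rw [he]; exact h1
  · have he : Fin.last (n + 1) = j := Fin.ext (by simp at hj ⊢; omega)
    rw [he]; exact h2

lemma ext_res (d : Dat (n + 2))
    (hc : d.val.2 ⟨n, by omega⟩ = true →
      (res d).val.1 (Fin.last n) = true ∧ d.val.1 (Fin.last (n + 1)) = true) :
    ext (res d) (d.val.1 (Fin.last (n + 1))) (d.val.2 ⟨n, by omega⟩) hc = d := by
  apply Subtype.ext
  apply Prod.ext
  · funext i
    induction i using Fin.lastCases with
    | last =>
      show (Fin.snoc (res d).val.1 _ : Fin (n+2) → Bool) (Fin.last (n+1)) = _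
      rw [Fin.snoc_last]
    | cast i =>
      show (Fin.snoc (res d).val.1 _ : Fin (n+2) → Bool) i.castSucc = _
      rw [Fin.snoc_castSucc]
      rfl
  · funext i
    show (if h : (i : ℕ) < n + 1 then
        (if (i : ℕ) = n then d.val.2 ⟨n, by omega⟩ else (res d).val.2 ⟨(i : ℕ), h⟩)
        else false) = d.val.2 i
    by_cases h : (i : ℕ) < n + 1
    · rw [dif_pos h]
      by_cases hn : (i : ℕ) = n
      · rw [if_pos hn]
        have he : (⟨n, by omega⟩ : Fin (n + 2)) = i := by
          apply Fin.ext
          simp only [Fin.val_mk]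
          omega
        rw [he]
      · rw [if_neg hn]
        show (if ((⟨(i : ℕ), h⟩ : Fin (n+1)) : ℕ) = n then false
          else d.val.2 (⟨(i : ℕ), h⟩ : Fin (n+1)).castSucc) = d.val.2 i
        rw [if_neg hn]
        congr 1
    · rw [dif_neg h]
      rw [snd_top_eq_false d (by have := i.isLt; omega)]

def E1 : Dat (n + 2) ≃ (Dat (n + 1) × Bool) ⊕ PDat n where
  toFun d :=
    if hco : d.val.2 ⟨n, by omega⟩ = true then
      Sum.inr ⟨res d, (hc_of d hco).1⟩
    else
      Sum.inl (res d, d.val.1 (Fin.last (n + 1)))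
  invFun x :=
    match x with
    | Sum.inl (t, b) => ext t b false (by simp)
    | Sum.inr ⟨t, ht⟩ => ext t true true (fun _ => ⟨ht, rfl⟩)
  left_inv d := by
    dsimp only
    by_cases hco : d.val.2 ⟨n, by omega⟩ = true
    · rw [dif_pos hco]
      show ext (res d) true true _ = d
      have h1 : d.val.1 (Fin.last (n + 1)) = true := (hc_of d hco).2
      calc ext (res d) true true _
          = ext (res d) (d.val.1 (Fin.last (n + 1))) (d.val.2 ⟨n, by omega⟩)
            (fun _ => hc_of d hco) := by
            congr 1
            · rw [h1]
            · rw [hco]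
        _ = d := ext_res d _
    · rw [dif_neg hco]
      show ext (res d) (d.val.1 (Fin.last (n + 1))) false _ = d
      have h2 : d.val.2 ⟨n, by omega⟩ = false := by
        rw [← Bool.not_eq_true]; exact hco
      calc ext (res d) (d.val.1 (Fin.last (n + 1))) false _
          = ext (res d) (d.val.1 (Fin.last (n + 1))) (d.val.2 ⟨n, by omega⟩)
            (fun hcc => hc_of d hcc) := by
            congr 1
            rw [h2]
        _ = d := ext_res d _
  right_inv x := by
    match x with
    | Sum.inl (t, b) =>
      show (if hco : (ext t b false _).val.2 ⟨n, by omega⟩ = true then _ else _) = _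
      have hfalse : (ext t b false (by simp)).val.2 ⟨n, by omega⟩ = false := by
        show (if h : ((⟨n, by omega⟩ : Fin (n+2)) : ℕ) < n + 1 then _ else _) = false
        rw [dif_pos (by simp)]
        simp
      rw [dif_neg (by rw [hfalse]; simp)]
      have hb : (ext t b false (by simp)).val.1 (Fin.last (n + 1)) = b := by
        show (Fin.snoc t.val.1 b : Fin (n+2) → Bool) (Fin.last (n+1)) = b
        rw [Fin.snoc_last]
      rw [res_ext, hb]
    | Sum.inr ⟨t, ht⟩ =>
      show (if hco : (ext t true true (fun _ => ⟨ht, rfl⟩)).val.2 ⟨n, by omega⟩ = true then _ else _) = _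
      have htrue : (ext t true true (fun _ => ⟨ht, rfl⟩)).val.2 ⟨n, by omega⟩ = true := by
        show (if h : ((⟨n, by omega⟩ : Fin (n+2)) : ℕ) < n + 1 then _ else _) = true
        rw [dif_pos (by simp)]
        simp
      rw [dif_pos htrue]
      congr 1
      exact Subtype.ext (res_ext t true true (fun _ => ⟨ht, rfl⟩))

def E2 : PDat (n + 1) ≃ Dat (n + 1) ⊕ PDat n where
  toFun d :=
    if hco : d.val.val.2 ⟨n, by omega⟩ = true then
      Sum.inr ⟨res d.val, (hc_of d.val hco).1⟩
    else
      Sum.inl (res d.val)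
  invFun x :=
    match x with
    | Sum.inl t => ⟨ext t true false (by simp), by
        show (Fin.snoc t.val.1 true : Fin (n+2) → Bool) (Fin.last (n+1)) = true
        rw [Fin.snoc_last]⟩
    | Sum.inr ⟨t, ht⟩ => ⟨ext t true true (fun _ => ⟨ht, rfl⟩), by
        show (Fin.snoc t.val.1 true : Fin (n+2) → Bool) (Fin.last (n+1)) = true
        rw [Fin.snoc_last]⟩
  left_inv d := by
    obtain ⟨dd, hd⟩ := d
    dsimp only
    by_cases hco : dd.val.2 ⟨n, by omega⟩ = true
    · rw [dif_pos hco]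
      apply Subtype.ext
      show ext (res dd) true true (fun _ => ⟨(hc_of dd hco).1, rfl⟩) = dd
      calc ext (res dd) true true (fun _ => ⟨(hc_of dd hco).1, rfl⟩)
          = ext (res dd) (dd.val.1 (Fin.last (n + 1))) (dd.val.2 ⟨n, by omega⟩)
            (fun _ => hc_of dd hco) := by
            congr 1
            · rw [hd]
            · rw [hco]
        _ = dd := ext_res dd _
    · rw [dif_neg hco]
      apply Subtype.ext
      show ext (res dd) true false (by simp) = dd
      have h2 : dd.val.2 ⟨n, by omega⟩ = false := by
        rw [← Bool.not_eq_true]; exact hco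
      calc ext (res dd) true false (by simp)
          = ext (res dd) (dd.val.1 (Fin.last (n + 1))) (dd.val.2 ⟨n, by omega⟩)
            (fun hcc => hc_of dd hcc) := by
            congr 1
            · rw [hd]
            · rw [h2]
        _ = dd := ext_res dd _
  right_inv x := by
    match x with
    | Sum.inl t =>
      show (if hco : (ext t true false (by simp)).val.2 ⟨n, by omega⟩ = true then _ else _) = _
      have hfalse : (ext t true false (by simp)).val.2 ⟨n, by omega⟩ = false := by
        show (if h : ((⟨n, by omega⟩ : Fin (n+2)) : ℕ) < n + 1 then _ else _) = false
        rw [dif_pos (by simp)]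
        simp
      rw [dif_neg (by rw [hfalse]; simp)]
      rw [res_ext]
    | Sum.inr ⟨t, ht⟩ =>
      show (if hco : (ext t true true (fun _ => ⟨ht, rfl⟩)).val.2 ⟨n, by omega⟩ = true then _ else _) = _
      have htrue : (ext t true true (fun _ => ⟨ht, rfl⟩)).val.2 ⟨n, by omega⟩ = true := by
        show (if h : ((⟨n, by omega⟩ : Fin (n+2)) : ℕ) < n + 1 then _ else _) = true
        rw [dif_pos (by simp)]
        simp
      rw [dif_pos htrue]
      congr 1
      exact Subtype.ext (res_ext t true true (fun _ => ⟨ht, rfl⟩))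

lemma card_base : Fintype.card (Dat 1) = 2 ∧ Fintype.card (PDat 0) = 1 := by
  constructor <;> decide

lemma card_rec (n : ℕ) :
    Fintype.card (Dat (n + 2)) = 2 * Fintype.card (Dat (n + 1)) + Fintype.card (PDat n)
    ∧ Fintype.card (PDat (n + 1)) = Fintype.card (Dat (n + 1)) + Fintype.card (PDat n) := by
  constructor
  · rw [Fintype.card_congr E1, Fintype.card_sum, Fintype.card_prod, Fintype.card_bool]
    ring
  · rw [Fintype.card_congr E2, Fintype.card_sum]

lemma card_dat_fib : ∀ n : ℕ,
    Fintype.card (Dat (n + 1)) = Nat.fib (2 * n + 3)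
    ∧ Fintype.card (PDat n) = Nat.fib (2 * n + 2) := by
  intro n
  induction n with
  | zero =>
    constructor
    · rw [card_base.1]; decide
    · rw [card_base.2]; decide
  | succ m IH =>
    obtain ⟨h1, h2⟩ := IH
    obtain ⟨r1, r2⟩ := card_rec m
    have f1 : Nat.fib (2 * m + 5) = Nat.fib (2 * m + 3) + Nat.fib (2 * m + 4) := by
      have h := Nat.fib_add_two (n := 2 * m + 3)
      have e1 : 2 * m + 3 + 2 = 2 * m + 5 := by ring
      have e2 : 2 * m + 3 + 1 = 2 * m + 4 := by ring
      rw [e1, e2] at h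
      exact h
    have f2 : Nat.fib (2 * m + 4) = Nat.fib (2 * m + 2) + Nat.fib (2 * m + 3) := by
      have h := Nat.fib_add_two (n := 2 * m + 2)
      have e1 : 2 * m + 2 + 2 = 2 * m + 4 := by ring
      have e2 : 2 * m + 2 + 1 = 2 * m + 3 := by ring
      rw [e1, e2] at h
      exact h
    constructor
    · rw [r1, h1, h2, show 2 * (m + 1) + 3 = 2 * m + 5 by ring, f1, f2]
      omega
    · rw [r2, h1, h2, show 2 * (m + 1) + 2 = 2 * m + 4 by ring, f2]
      omega

end HKFib
end Part6

/-- The cardinality of the Hecke–Kiselman monoid of the bipartite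
type-`A` quiver `K_n` equals the Fibonacci number `F_{2n+1}` (with `F_1 = F_2 = 1`). -/
theorem hk_card_bipartite_fib (n : ℕ) (hn : 1 ≤ n) :
    Nat.card (HK (arrKn n)) = Nat.fib (2 * n + 1) := by
  obtain ⟨m, rfl⟩ : ∃ m, n = m + 1 := ⟨n - 1, by omega⟩
  have he : 2 * (m + 1) + 1 = 2 * m + 3 := by ring
  rw [he, HKFib.card_hk_eq_card_dat, Nat.card_eq_fintype_card,
    (HKFib.card_dat_fib m).1]
end
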